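/- Consider the full (unsimplified) ADMM iteration with two multiplier sequences: for k ∈ ℕ, given π_d(k+1), π_s(k+1) ∈ ℝ^E, define π(k+1) ∈ ℝ^E coordinatewise by π_e(k+1) = (π_{e,d}(k+1) + π_{e,s}(k+1))/2 + (α_{e,d}(k) − α_{e,s}(k))/(2η) (the exact minimizer of the augmented Lagrangian in π), and update the multipliers by α_{e,d}(k+1) = α_{e,d}(k) + η(π_{e,d}(k+1) − π_e(k+1)) and α_{e,s}(k+1) = α_{e,s}(k) + η(π_e(k+1) − π_{e,s}(k+1)). If α_d(0) = α_s(0), then for all k ≥ 0 one has α_d(k) = α_s(k) =: α(k), the π-update simplifies to π_e(k+1) = (π_{e,d}(k+1) + π_{e,s}(k+1))/2, and the multiplier update simplifies to α_e(k+1) = α_e(k) + (η/2)(π_{e,d}(k+1) − π_{e,s}(k+1)). These are exactly the simplified iterative steps (5)–(6) (equivalently (9)–(10)) of the distributed algorithm. -/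
import Mathlib


/-- In the full (unsimplified) ADMM iteration with two multiplier sequences,
where `π(k+1)` is the exact minimizer of the augmented Lagrangian in `π` and the two
multipliers are updated by `αd(k+1) = αd(k) + η(πd(k+1) − π(k+1))` and
`αs(k+1) = αs(k) + η(π(k+1) − πs(k+1))`, if `αd(0) = αs(0)` then for all `k ≥ 0` the two
multipliers agree, the π-update simplifies to `π(k+1) = (πd(k+1) + πs(k+1))/2`, and the
multiplier update simplifies to `α(k+1) = α(k) + (η/2)(πd(k+1) − πs(k+1))` — exactly the
simplified steps (5)–(6) / (9)–(10) of the distributed algorithm. -/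
theorem admm_simplification
    {E : Type*} [Fintype E]
    (η : ℝ) (hη : 0 < η)
    (πd πs π αd αs : ℕ → E → ℝ)
    (hπ : ∀ k : ℕ, ∀ e : E,
      π (k + 1) e = (πd (k + 1) e + πs (k + 1) e) / 2 + (αd k e - αs k e) / (2 * η))
    (hαd : ∀ k : ℕ, ∀ e : E,
      αd (k + 1) e = αd k e + η * (πd (k + 1) e - π (k + 1) e))
    (hαs : ∀ k : ℕ, ∀ e : E,
      αs (k + 1) e = αs k e + η * (π (k + 1) e - πs (k + 1) e))
    (h0 : αd 0 = αs 0) :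
    ∀ k : ℕ, αd k = αs k ∧
      (∀ e : E, π (k + 1) e = (πd (k + 1) e + πs (k + 1) e) / 2) ∧
      (∀ e : E, αd (k + 1) e = αd k e + (η / 2) * (πd (k + 1) e - πs (k + 1) e)) := by
  have key : ∀ k : ℕ, αd k = αs k := by
    intro k
    induction k with
    | zero => exact h0
    | succ n ih =>
      funext e
      have hp := hπ n e
      rw [ih] at hp
      simp at hp
      rw [hαd n e, hαs n e, hp, congrFun ih e]
      ring
  intro k
  refine ⟨key k, ?_, ?_⟩
  · intro e
    have hp := hπ k e
    rw [key k] at hp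
    simpa using hp
  · intro e
    have hp := hπ k e
    rw [key k] at hp
    simp at hp
    rw [hαd k e, hp]
    ring
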